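/- Let (X_n)_{n∈ℕ} be an i.i.d. sequence of ℝ^k-valued random vectors with common distribution μ, and let E = {X_1, X_2, ...}. Then almost surely the closure of E (in the Euclidean topology of ℝ^k) equals the heavy set H(μ); i.e., the closure of an infinite random sample is almost surely the deterministic set of heavy points of the distribution. -/

import Mathlib

/-!
The support of `μ` is closed and, in a second countable space, `μ`-conull; hence almost surely
every sample point lies in it, and so does the closure of the sample. Conversely, fix a countable
basis of the topology. For each basis set `U` with `μ U > 0` the events `{X n ∈ U}` are independent
with probabilities `μ U`, so by the second Borel–Cantelli lemma almost surely some `X n` lies in `U`.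
Intersecting these countably many events, almost surely every basis set meeting the support
contains a sample point, which puts the support inside the closure of the sample.
-/

open MeasureTheory ProbabilityTheory Filter Set TopologicalSpace

namespace ProbabilityTheory

variable {Ω β : Type*} [MeasurableSpace Ω] [MeasurableSpace β] {P : Measure Ω} {μ : Measure β}
  {X : ℕ → Ω → β}

lemma iIndepFun.iIndepSet_preimage (hmeas : ∀ n, Measurable (X n)) (hindep : iIndepFun X P)
    {s : Set β} (hs : MeasurableSet s) : iIndepSet (fun n => X n ⁻¹' s) P :=
  (iIndepSet_iff_meas_biInter fun n => hmeas n hs).2 fun t =>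
    hindep.measure_inter_preimage_eq_mul t (sets := fun _ => s) fun _ _ => hs

lemma ae_frequently_mem_of_iIndepFun (hmeas : ∀ n, Measurable (X n)) (hindep : iIndepFun X P)
    (hdist : ∀ n, P.map (X n) = μ) {s : Set β} (hs : MeasurableSet s) (hμs : μ s ≠ 0) :
    ∀ᵐ ω ∂P, ∃ᶠ n in atTop, X n ω ∈ s := by
  have := hindep.isProbabilityMeasure
  have hprob : ∀ n, P (X n ⁻¹' s) = μ s := fun n => by
    rw [← hdist n, Measure.map_apply (hmeas n) hs]
  have hlimsup : P (limsup (fun n => X n ⁻¹' s) atTop) = 1 :=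
    measure_limsup_eq_one (fun n => hmeas n hs) (hindep.iIndepSet_preimage hmeas hs)
      (by simpa only [hprob] using ENNReal.tsum_const_eq_top_of_ne_zero hμs)
  filter_upwards [(prob_compl_eq_zero_iff (MeasurableSet.measurableSet_limsup fun n => hmeas n hs)).2
    hlimsup] with ω hω
  exact mem_limsup_iff_frequently_mem.1 hω

variable [TopologicalSpace β]

lemma ae_forall_mem_support [HereditarilyLindelofSpace β] (hmeas : ∀ n, Measurable (X n))
    (hdist : ∀ n, P.map (X n) = μ) : ∀ᵐ ω ∂P, ∀ n, X n ω ∈ μ.support :=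
  ae_all_iff.2 fun n => ae_of_ae_map (hmeas n).aemeasurable (hdist n ▸ Measure.support_mem_ae)

lemma ae_support_subset_closure_range [SecondCountableTopology β] [OpensMeasurableSpace β]
    (hmeas : ∀ n, Measurable (X n)) (hindep : iIndepFun X P) (hdist : ∀ n, P.map (X n) = μ) :
    ∀ᵐ ω ∂P, μ.support ⊆ closure (range fun n => X n ω) := by
  have hhit : ∀ᵐ ω ∂P, ∀ U ∈ {U ∈ countableBasis β | μ U ≠ 0}, ∃ n, X n ω ∈ U :=
    (ae_ball_iff ((countable_countableBasis β).mono (sep_subset _ _))).2 fun U ⟨hU, hμU⟩ =>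
      (ae_frequently_mem_of_iIndepFun hmeas hindep hdist
        (isOpen_of_mem_countableBasis hU).measurableSet hμU).mono fun _ h => h.exists
  filter_upwards [hhit] with ω hω x hx
  refine (isBasis_countableBasis β).mem_closure_iff.2 fun U hU hxU => ?_
  have hμU : 0 < μ U :=
    (Measure.mem_support_iff_forall x).1 hx U ((isOpen_of_mem_countableBasis hU).mem_nhds hxU)
  obtain ⟨n, hn⟩ := hω U ⟨hU, hμU.ne'⟩
  exact ⟨X n ω, hn, n, rfl⟩

end ProbabilityTheory

theorem closure_sample_eq_heavy_set_general (k : ℕ) {Ω : Type*} [MeasurableSpace Ω]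
    (P : Measure Ω)
    (μ : Measure (EuclideanSpace ℝ (Fin k)))
    (X : ℕ → Ω → EuclideanSpace ℝ (Fin k))
    (hmeas : ∀ n, Measurable (X n))
    (hindep : ProbabilityTheory.iIndepFun X P)
    (hdist : ∀ n, Measure.map (X n) P = μ) :
    ∀ᵐ ω ∂P, closure (Set.range fun n => X n ω) =
      {x : EuclideanSpace ℝ (Fin k) |
        ∀ U : Set (EuclideanSpace ℝ (Fin k)), IsOpen U → x ∈ U → 0 < μ U} := by
  have heavy_eq_support : {x : EuclideanSpace ℝ (Fin k) |
      ∀ U : Set (EuclideanSpace ℝ (Fin k)), IsOpen U → x ∈ U → 0 < μ U} = μ.support := by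
    simp only [Measure.support_eq_forall_isOpen, imp.swap]
  filter_upwards [ae_forall_mem_support hmeas hdist,
    ae_support_subset_closure_range hmeas hindep hdist] with ω hsample hsupport
  rw [heavy_eq_support]
  exact (closure_minimal (range_subset_iff.2 hsample) Measure.isClosed_support).antisymm hsupport

theorem closure_sample_eq_heavy_set (k : ℕ) {Ω : Type*} [MeasurableSpace Ω]
    (P : Measure Ω) [IsProbabilityMeasure P]
    (μ : Measure (EuclideanSpace ℝ (Fin k))) [IsProbabilityMeasure μ]
    (X : ℕ → Ω → EuclideanSpace ℝ (Fin k))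
    (hmeas : ∀ n, Measurable (X n))
    (hindep : ProbabilityTheory.iIndepFun X P)
    (hdist : ∀ n, Measure.map (X n) P = μ) :
    ∀ᵐ ω ∂P, closure (Set.range fun n => X n ω) =
      {x : EuclideanSpace ℝ (Fin k) |
        ∀ U : Set (EuclideanSpace ℝ (Fin k)), IsOpen U → x ∈ U → 0 < μ U} :=
  closure_sample_eq_heavy_set_general k P μ X hmeas hindep hdist
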